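/- (Separation of a neighborhood) Let x_1,...,x_M, x_j be i.i.d. random vectors from a product distribution with components in [-1,1], mean zero, variances summing to R_0^2 > 0. Fix 0 < ε < 1 and 0 < μ < 1 - ε. Define h(x) = ⟨x/R_0, x_j/R_0⟩ - 1 + ε + μ, and Ω = {x ∈ R^n : ⟨x_j/R_0, (x_j - x)/R_0⟩ ≤ μ}. Then P(h(x) ≥ 0 for all x ∈ Ω, and h(x_i) < 0 for all i = 1,...,M) ≥ 1 - exp(-2 R_0^4 ε^2 / n) - M exp(-R_0^4 (1-ε-μ)^2 / (2n)). -/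

import Mathlib

/-!
Outside two bad events the claim is deterministic. If `‖x_j‖² ≥ (1 - ε) R₀²`, every `v ∈ Ω` has
`⟨v, x_j⟩ ≥ ‖x_j‖² - μ R₀² ≥ (1 - ε - μ) R₀²`, i.e. `h(v) ≥ 0`; and `⟨x_i, x_j⟩ < (1 - ε - μ) R₀²`
is exactly `h(x_i) < 0`.

The first bad event is a deviation of `∑ₗ (σₗ² - x_{j,l}²)`, a sum of independent centred terms
in intervals of length one, so Hoeffding's inequality bounds it. For the second, independence of
`x_i` and `x_j` lets one integrate first over `x_i` with `x_j = y` fixed; then `⟨x_i, y⟩` is a sum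
of independent centred terms in `[-1, 1]`, sub-Gaussian with parameter `n` uniformly in `y`, so
`⟨x_i, x_j⟩` is too, and a Chernoff bound and a union bound over `i` finish the proof.
-/

open MeasureTheory ProbabilityTheory Real Set

lemma mul_mem_Icc_neg_one_one {a b : ℝ} (ha : a ∈ Icc (-1 : ℝ) 1) (hb : b ∈ Icc (-1 : ℝ) 1) :
    a * b ∈ Icc (-1 : ℝ) 1 := by
  rw [mem_Icc, ← abs_le, abs_mul] at *
  exact mul_le_one₀ ha (abs_nonneg b) hb

lemma sum_mem_Icc_neg_card_card {ι : Type*} [Fintype ι] {f : ι → ℝ}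
    (hf : ∀ l, f l ∈ Icc (-1 : ℝ) 1) : ∑ l, f l ∈ Icc (-(Fintype.card ι : ℝ)) (Fintype.card ι) := by
  constructor
  · simpa using Finset.card_nsmul_le_sum Finset.univ f (-1 : ℝ) fun l _ => (hf l).1
  · simpa using Finset.sum_le_card_nsmul Finset.univ f (1 : ℝ) fun l _ => (hf l).2

section

variable {Ω : Type*} [MeasurableSpace Ω] {P : Measure Ω} [IsProbabilityMeasure P]
  {ι : Type*} [Fintype ι]

lemma measureReal_sum_ge_le_of_iIndepFun_of_mem_Icc {X : ι → Ω → ℝ} (hindep : iIndepFun X P)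
    (hmeas : ∀ l, Measurable (X l)) {a b : ι → ℝ} (hX : ∀ l ω, X l ω ∈ Icc (a l) (b l))
    (hmean : ∀ l, P[X l] = 0) {c : ℝ} (hc : 0 ≤ c) :
    P.real {ω | c ≤ ∑ l, X l ω} ≤ exp (-(2 * c ^ 2 / ∑ l, (b l - a l) ^ 2)) := by
  have hsub : ∀ l ∈ Finset.univ, HasSubgaussianMGF (X l) ((‖b l - a l‖₊ / 2) ^ 2) P :=
    fun l _ => hasSubgaussianMGF_of_mem_Icc_of_integral_eq_zero (hmeas l).aemeasurable
      (ae_of_all _ (hX l)) (hmean l)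
  refine (HasSubgaussianMGF.measure_sum_ge_le_of_iIndepFun hindep hsub hc).trans_eq ?_
  push_cast
  simp only [norm_eq_abs, div_pow, sq_abs, ← Finset.sum_div]
  ring_nf

lemma measureReal_sum_sub_sq_ge_le {Z : Ω → ι → ℝ} (hZ : ∀ l, Measurable fun ω => Z ω l)
    (hindep : iIndepFun (fun l ω => Z ω l) P) (hbd : ∀ ω l, Z ω l ∈ Icc (-1 : ℝ) 1)
    {σ : ι → ℝ} (hvar : ∀ l, P[fun ω => Z ω l ^ 2] = σ l ^ 2) {c : ℝ} (hc : 0 ≤ c) :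
    P.real {ω | c ≤ ∑ l, (σ l ^ 2 - Z ω l ^ 2)} ≤ exp (-(2 * c ^ 2 / Fintype.card ι)) := by
  have hsq : ∀ l ω, Z ω l ^ 2 ∈ Icc (0 : ℝ) 1 := fun l ω =>
    ⟨sq_nonneg _, (sq_le_one_iff_abs_le_one _).2 (abs_le.2 (hbd ω l))⟩
  have hcentered : ∀ l, P[fun ω => σ l ^ 2 - Z ω l ^ 2] = 0 := fun l => by
    rw [integral_sub (integrable_const _)
      (Integrable.of_mem_Icc 0 1 (by fun_prop) (ae_of_all _ (hsq l))), hvar]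
    simp
  convert measureReal_sum_ge_le_of_iIndepFun_of_mem_Icc
    (X := fun l ω => σ l ^ 2 - Z ω l ^ 2) (a := fun l => σ l ^ 2 - 1) (b := fun l => σ l ^ 2)
    (hindep.comp (fun l r => σ l ^ 2 - r ^ 2) fun l => by fun_prop) (fun l => by fun_prop)
    (fun l ω => ⟨by linarith [(hsq l ω).2], by linarith [(hsq l ω).1]⟩) hcentered hc using 4
  simp only [sub_sub_cancel, one_pow, Finset.sum_const, Finset.card_univ, nsmul_eq_mul, mul_one]

lemma hasSubgaussianMGF_sum_mul_const {Z : Ω → ι → ℝ} (hZ : ∀ l, Measurable fun ω => Z ω l)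
    (hindep : iIndepFun (fun l ω => Z ω l) P) (hbd : ∀ ω l, Z ω l ∈ Icc (-1 : ℝ) 1)
    (hmean : ∀ l, P[fun ω => Z ω l] = 0) {y : ι → ℝ} (hy : ∀ l, y l ∈ Icc (-1 : ℝ) 1) :
    HasSubgaussianMGF (fun ω => ∑ l, Z ω l * y l) (Fintype.card ι) P := by
  have hsub : ∀ l ∈ Finset.univ, HasSubgaussianMGF (fun ω => Z ω l * y l) 1 P := by
    intro l _
    convert hasSubgaussianMGF_of_mem_Icc_of_integral_eq_zero ((hZ l).mul_const (y l)).aemeasurable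
      (ae_of_all _ fun ω => mul_mem_Icc_neg_one_one (hbd ω l) (hy l))
      (by rw [integral_mul_const, hmean l, zero_mul])
    ext; norm_num
  simpa using HasSubgaussianMGF.sum_of_iIndepFun
    (hindep.comp (fun l r => r * y l) fun l => measurable_id.mul_const (y l)) hsub

lemma hasSubgaussianMGF_sum_mul_of_indepFun {U V : Ω → ι → ℝ} (hU : Measurable U)
    (hV : Measurable V) (hUV : IndepFun U V P) (hUindep : iIndepFun (fun l ω => U ω l) P)
    (hUbd : ∀ ω l, U ω l ∈ Icc (-1 : ℝ) 1) (hVbd : ∀ ω l, V ω l ∈ Icc (-1 : ℝ) 1)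
    (hUmean : ∀ l, P[fun ω => U ω l] = 0) :
    HasSubgaussianMGF (fun ω => ∑ l, U ω l * V ω l) (Fintype.card ι) P := by
  have hS : Measurable fun ω => ∑ l, U ω l * V ω l := by fun_prop
  have hSbd : ∀ ω, ∑ l, U ω l * V ω l ∈ Icc (-(Fintype.card ι : ℝ)) (Fintype.card ι) :=
    fun ω => sum_mem_Icc_neg_card_card fun l => mul_mem_Icc_neg_one_one (hUbd ω l) (hVbd ω l)
  refine ⟨fun t => integrable_exp_mul_of_mem_Icc hS.aemeasurable (ae_of_all _ hSbd), fun t => ?_⟩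
  set F : (ι → ℝ) × (ι → ℝ) → ℝ := fun z => exp (t * ∑ l, z.1 l * z.2 l)
  have hF : Measurable F := by fun_prop
  have hlaw : P.map (fun ω => (U ω, V ω)) = (P.map U).prod (P.map V) :=
    (indepFun_iff_map_prod_eq_prod_map_map hU.aemeasurable hV.aemeasurable).1 hUV
  have hFint : Integrable F ((P.map U).prod (P.map V)) := by
    rw [← hlaw, integrable_map_measure hF.aestronglyMeasurable (hU.prodMk hV).aemeasurable]
    exact integrable_exp_mul_of_mem_Icc hS.aemeasurable (ae_of_all _ hSbd)
  have hVbox : ∀ᵐ y ∂(P.map V), ∀ l, y l ∈ Icc (-1 : ℝ) 1 :=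
    (ae_map_iff hV.aemeasurable (by measurability)).2 (ae_of_all _ hVbd)
  have hinner : ∀ y, (∀ l, y l ∈ Icc (-1 : ℝ) 1) →
      ∫ u, F (u, y) ∂(P.map U) ≤ exp (Fintype.card ι * t ^ 2 / 2) := by
    intro y hy
    rw [integral_map hU.aemeasurable (by fun_prop)]
    exact (hasSubgaussianMGF_sum_mul_const (fun l => by fun_prop) hUindep hUbd hUmean hy).mgf_le t
  -- the law of `(U, V)` is a product, so the MGF is an iterated integral over `y = V ω` outside
  calc mgf (fun ω => ∑ l, U ω l * V ω l) P t
      = ∫ y, ∫ u, F (u, y) ∂(P.map U) ∂(P.map V) := by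
        rw [← integral_prod_symm F hFint, ← hlaw, integral_map (hU.prodMk hV).aemeasurable
          hF.aestronglyMeasurable]
        rfl
    _ ≤ ∫ _, exp (Fintype.card ι * t ^ 2 / 2) ∂(P.map V) :=
        integral_mono_ae hFint.integral_prod_right (integrable_const _)
          (hVbox.mono fun y hy => hinner y hy)
    _ = exp (Fintype.card ι * t ^ 2 / 2) := by
        have := Measure.isProbabilityMeasure_map (μ := P) hV.aemeasurable
        simp

lemma one_sub_measureReal_sub_sum_le {s A : Set Ω} {B : ι → Set Ω}
    (h : Aᶜ ∩ ⋂ i, (B i)ᶜ ⊆ s) : 1 - P.real A - ∑ i, P.real (B i) ≤ P.real s := by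
  have hcover : univ ⊆ (A ∪ ⋃ i, B i) ∪ s := fun ω _ => by
    by_contra hω
    simp only [mem_union, mem_iUnion, not_or, not_exists] at hω
    exact hω.2 (h ⟨hω.1.1, mem_iInter.2 hω.1.2⟩)
  have hunion := measureReal_union_le (μ := P) A (⋃ i, B i)
  have hiUnion := measureReal_iUnion_fintype_le (μ := P) B
  have hsplit := measureReal_union_le (μ := P) (A ∪ ⋃ i, B i) s
  have huniv := measureReal_mono (μ := P) hcover
  rw [probReal_univ] at huniv
  linarith

lemma functional_nonneg_of_mem_halfspace {R ε μ : ℝ} (hR : 0 < R) {y v : ι → ℝ}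
    (hy : (1 - ε) * R ^ 2 ≤ ∑ l, y l ^ 2) (hv : (∑ l, y l * (y l - v l)) / R ^ 2 ≤ μ) :
    0 ≤ (∑ l, v l * y l) / R ^ 2 - 1 + ε + μ := by
  have hR2 : 0 < R ^ 2 := by positivity
  have hexpand : ∑ l, y l * (y l - v l) = ∑ l, y l ^ 2 - ∑ l, v l * y l := by
    rw [← Finset.sum_sub_distrib]
    exact Finset.sum_congr rfl fun l _ => by ring
  rw [div_le_iff₀ hR2, hexpand] at hv
  have : 1 - ε - μ ≤ (∑ l, v l * y l) / R ^ 2 := by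
    rw [le_div_iff₀ hR2]
    linarith
  linarith

end

theorem neighborhood_separation_general
    {Ω : Type*} [MeasurableSpace Ω] (P : Measure Ω) [IsProbabilityMeasure P]
    (n M : ℕ) (x : Fin (M + 1) → Ω → (Fin n → ℝ))
    (hmeas : ∀ i, Measurable (x i))
    (hindep : iIndepFun x P)
    (hcompindep : ∀ i, iIndepFun (fun j ω => x i ω j) P)
    (hbound : ∀ i j ω, x i ω j ∈ Set.Icc (-1 : ℝ) 1)
    (hmean : ∀ i j, ∫ ω, x i ω j ∂P = 0)
    (σ : Fin n → ℝ) (hvar : ∀ i j, ∫ ω, (x i ω j) ^ 2 ∂P = (σ j) ^ 2)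
    (R0 : ℝ) (hR0 : 0 < R0) (hR0sq : R0 ^ 2 = ∑ j, (σ j) ^ 2)
    (ε μ : ℝ) (hε : 0 < ε) (hμ1 : μ < 1 - ε) :
    1 - Real.exp (-(2 * R0 ^ 4 * ε ^ 2 / n))
      - M * Real.exp (-(R0 ^ 4 * (1 - ε - μ) ^ 2 / (2 * n))) ≤
    (P {ω |
        (∀ v : Fin n → ℝ,
          (∑ l, x (Fin.last M) ω l * (x (Fin.last M) ω l - v l)) / R0 ^ 2 ≤ μ →
          0 ≤ (∑ l, v l * x (Fin.last M) ω l) / R0 ^ 2 - 1 + ε + μ) ∧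
        ∀ i : Fin M,
          (∑ l, x i.castSucc ω l * x (Fin.last M) ω l) / R0 ^ 2 - 1 + ε + μ < 0}).toReal := by
  set j := Fin.last M
  have hR2 : 0 < R0 ^ 2 := by positivity
  set badNorm : Set Ω := {ω | ε * R0 ^ 2 ≤ ∑ l, (σ l ^ 2 - x j ω l ^ 2)}
  set badSample : Fin M → Set Ω :=
    fun i => {ω | (1 - ε - μ) * R0 ^ 2 ≤ ∑ l, x i.castSucc ω l * x j ω l}
  have hnorm : P.real badNorm ≤ exp (-(2 * R0 ^ 4 * ε ^ 2 / n)) := by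
    convert measureReal_sum_sub_sq_ge_le (fun l => by fun_prop) (hcompindep j)
      (fun ω l => hbound j l ω) (hvar j) (by positivity : 0 ≤ ε * R0 ^ 2) using 3
    simp only [Fintype.card_fin]
    ring
  have hsample : ∀ i, P.real (badSample i) ≤ exp (-(R0 ^ 4 * (1 - ε - μ) ^ 2 / (2 * n))) := by
    intro i
    have := (hasSubgaussianMGF_sum_mul_of_indepFun (hmeas _) (hmeas j)
      (hindep.indepFun (Fin.castSucc_lt_last i).ne) (hcompindep _) (fun ω l => hbound _ l ω)
      (fun ω l => hbound j l ω) (hmean _)).measure_ge_le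
      (mul_nonneg (by linarith) hR2.le : 0 ≤ (1 - ε - μ) * R0 ^ 2)
    convert this using 3
    simp only [Fintype.card_fin, NNReal.coe_natCast]
    ring
  refine le_trans ?_ (one_sub_measureReal_sub_sum_le (A := badNorm) (B := badSample) ?_)
  · have := Finset.sum_le_sum fun i (_ : i ∈ Finset.univ) => hsample i
    simp only [Finset.sum_const, Finset.card_univ, Fintype.card_fin, nsmul_eq_mul] at this
    linarith
  · rintro ω ⟨hωnorm, hωsample⟩
    simp only [badNorm, badSample, mem_compl_iff, mem_ofPred_eq, not_le, mem_iInter]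
      at hωnorm hωsample
    rw [Finset.sum_sub_distrib, ← hR0sq] at hωnorm
    refine ⟨fun v hv => functional_nonneg_of_mem_halfspace hR0 (by linarith) hv, fun i => ?_⟩
    have := (div_lt_iff₀ hR2).2 (hωsample i)
    linarith

/-- Separation of a neighborhood (Corollary, Case 2): with probability at least
`1 - exp(-2R₀⁴ε²/n) - M exp(-R₀⁴(1-ε-μ)²/(2n))`, the functional
`h(v) = ⟨v/R₀, x_j/R₀⟩ - 1 + ε + μ` is nonnegative on the half-space
`Ω = {v : ⟨x_j/R₀, (x_j - v)/R₀⟩ ≤ μ}` and negative at all sample points. -/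
theorem neighborhood_separation
    {Ω : Type*} [MeasurableSpace Ω] (P : Measure Ω) [IsProbabilityMeasure P]
    (n M : ℕ) (hn : 0 < n) (x : Fin (M + 1) → Ω → (Fin n → ℝ))
    (hmeas : ∀ i, Measurable (x i))
    (hindep : iIndepFun x P)
    (hident : ∀ i i', Measure.map (x i) P = Measure.map (x i') P)
    (hcompindep : ∀ i, iIndepFun (fun j ω => x i ω j) P)
    (hbound : ∀ i j ω, x i ω j ∈ Set.Icc (-1 : ℝ) 1)
    (hmean : ∀ i j, ∫ ω, x i ω j ∂P = 0)
    (σ : Fin n → ℝ) (hvar : ∀ i j, ∫ ω, (x i ω j) ^ 2 ∂P = (σ j) ^ 2)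
    (R0 : ℝ) (hR0 : 0 < R0) (hR0sq : R0 ^ 2 = ∑ j, (σ j) ^ 2)
    (ε μ : ℝ) (hε : 0 < ε) (hε1 : ε < 1) (hμ : 0 < μ) (hμ1 : μ < 1 - ε) :
    1 - Real.exp (-(2 * R0 ^ 4 * ε ^ 2 / n))
      - M * Real.exp (-(R0 ^ 4 * (1 - ε - μ) ^ 2 / (2 * n))) ≤
    (P {ω |
        (∀ v : Fin n → ℝ,
          (∑ l, x (Fin.last M) ω l * (x (Fin.last M) ω l - v l)) / R0 ^ 2 ≤ μ →
          0 ≤ (∑ l, v l * x (Fin.last M) ω l) / R0 ^ 2 - 1 + ε + μ) ∧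
        ∀ i : Fin M,
          (∑ l, x i.castSucc ω l * x (Fin.last M) ω l) / R0 ^ 2 - 1 + ε + μ < 0}).toReal :=
  neighborhood_separation_general P n M x hmeas hindep hcompindep hbound hmean σ hvar R0 hR0 hR0sq ε
    μ hε hμ1
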